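/- If g ∈ SL_n(K) stabilizes tropically a point x ∈ (ℝ ∪ {-∞})^n with support I ≠ ∅, then g maps the subspace V_I = span{e_i : i ∈ I} of K^n into itself, i.e., g restricts to an endomorphism of V_I. -/

import Mathlib

/-!
In `EReal` a sum is `⊥` as soon as one summand is, and a supremum is `⊥` only if every term is.
So for `k` outside the support the stabilization equation `⨆ j, (-v (g k j) + x j) = ⊥` forces
`v (g k i) = ⊤`, i.e. `g k i = 0`, for every `i` in the support: the columns of `g` indexed by the
support vanish outside it, which is exactly invariance of `V_I`.
-/

theorem Pi.mem_span_image_single_one_iff {R ι : Type*} [Semiring R] [Finite ι] [DecidableEq ι]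
    {s : Set ι} {f : ι → R} :
    f ∈ Submodule.span R ((fun i => (Pi.single i 1 : ι → R)) '' s) ↔ ∀ k ∉ s, f k = 0 := by
  have hb : (fun i => (Pi.single i 1 : ι → R)) = Pi.basisFun R ι := by
    ext1 i; exact (Pi.basisFun_apply R ι i).symm
  rw [hb, Module.Basis.mem_span_image]
  simp only [Set.subset_def, Finset.mem_coe, Finsupp.mem_support_iff, Pi.basisFun_repr]
  exact forall_congr' fun k => not_imp_comm

theorem Matrix.map_mulVecLin_span_single_le {R ι : Type*} [CommSemiring R] [Fintype ι]
    [DecidableEq ι] (g : Matrix ι ι R) {s : Set ι} (hg : ∀ i ∈ s, ∀ k ∉ s, g k i = 0) :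
    (Submodule.span R ((fun i => (Pi.single i 1 : ι → R)) '' s)).map g.mulVecLin
      ≤ Submodule.span R ((fun i => (Pi.single i 1 : ι → R)) '' s) := by
  rw [Submodule.map_span, Submodule.span_le]
  rintro _ ⟨_, ⟨i, hi, rfl⟩, rfl⟩
  rw [SetLike.mem_coe, Pi.mem_span_image_single_one_iff]
  intro k hk
  simpa [Matrix.mulVec_single_one] using hg i hi k hk

theorem EReal.eq_top_of_iSup_neg_add_eq_bot {ι : Type*} {a x : ι → EReal}
    (h : ⨆ j, (-a j + x j) = ⊥) {i : ι} (hi : x i ≠ ⊥) : a i = ⊤ := by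
  have := iSup_eq_bot.mp h i
  rw [EReal.add_eq_bot_iff, EReal.neg_eq_bot_iff] at this
  exact this.resolve_right hi

theorem tropical_stabilizer_preserves_subspace_general {K : Type*} [Field K] {n : ℕ}
    (v : K → EReal)
    (hfin : ∀ a : K, a ≠ 0 → ∃ r : ℝ, v a = (r : EReal))
    (g : Matrix (Fin n) (Fin n) K)
    (x : Fin n → EReal)
    (hstab : ∀ i, (⨆ j, (-(v (g i j)) + x j)) = x i) :
    (Submodule.span K ((fun i => (Pi.single i 1 : Fin n → K)) '' {i | x i ≠ ⊥})).map
        g.mulVecLin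
      ≤ Submodule.span K ((fun i => (Pi.single i 1 : Fin n → K)) '' {i | x i ≠ ⊥}) := by
  refine g.map_mulVecLin_span_single_le fun i hi k hk => ?_
  have hv : v (g k i) = ⊤ :=
    EReal.eq_top_of_iSup_neg_add_eq_bot ((hstab k).trans (not_not.mp hk)) hi
  by_contra hne
  obtain ⟨r, hr⟩ := hfin _ hne
  exact EReal.coe_ne_top r (hr ▸ hv)

/-- If `g ∈ SL_n(K)` tropically stabilizes `x ∈ (ℝ ∪ {-∞})^n` with
nonempty support `I`, then `g` maps the subspace `V_I = span{e_i : i ∈ I}` of `K^n`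
into itself. -/
theorem tropical_stabilizer_preserves_subspace {K : Type*} [Field K] {n : ℕ}
    (v : K → EReal) (h0 : v 0 = ⊤)
    (hfin : ∀ a : K, a ≠ 0 → ∃ r : ℝ, v a = (r : EReal))
    (g : Matrix (Fin n) (Fin n) K) (hg : g.det = 1)
    (x : Fin n → EReal) (hxtop : ∀ i, x i ≠ ⊤) (hI : ∃ i, x i ≠ ⊥)
    (hstab : ∀ i, (⨆ j, (-(v (g i j)) + x j)) = x i) :
    (Submodule.span K ((fun i => (Pi.single i 1 : Fin n → K)) '' {i | x i ≠ ⊥})).map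
        g.mulVecLin
      ≤ Submodule.span K ((fun i => (Pi.single i 1 : Fin n → K)) '' {i | x i ≠ ⊥}) :=
  tropical_stabilizer_preserves_subspace_general v hfin g x hstab
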